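/- Let π be a probability measure on ℝ^d with density π(θ) such that −log π is three times continuously differentiable and α-strongly convex, and suppose sup_θ Σ_{i=1}^d ‖(D² ∂ᵢ log π)(θ)‖₂² ≤ M². Let θ* be the maximizer of log π, H* = −(D² log π)(θ*), and let π̂ = N(θ*, (H*)^{−1}) be the Laplace approximation with (H*)^{−1} having eigenvalues λ. Then the (1, π̂)-Fisher distance between π̂ and π is at most M·‖λ‖₁, i.e., ∫ ‖∇log π(θ) + H*(θ − θ*)‖₂ π̂(dθ) ≤ M·‖λ‖₁. -/

import Mathlib

/-!
At the mode `θs` the gradient of `log p` vanishes and its derivative is `-H*`, so the integrand is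
the remainder of the first-order Taylor expansion of `∇ log p` at `θs`. The norm of the Hessian of
`∇ log p` is dominated by the `ℓ²` sum of the norms of the Hessians of its components, hence by
`M`; the remainder is therefore at most `M ‖θ - θs‖²`, whose expectation under the Laplace
approximation is the sum of the Gaussian variances `∑ i, lam i`.
-/

open MeasureTheory ProbabilityTheory Set Metric
open scoped NNReal

section Taylor
variable {E F : Type*} [NormedAddCommGroup E] [NormedSpace ℝ E] [NormedAddCommGroup F]
  [NormedSpace ℝ F]

lemma norm_sub_sub_fderiv_le_of_norm_iteratedFDeriv_two_le {g : E → F} (hg : ContDiff ℝ 2 g)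
    {M : ℝ} (hM : ∀ x, ‖iteratedFDeriv ℝ 2 g x‖ ≤ M) (x y : E) :
    ‖g x - g y - fderiv ℝ g y (x - y)‖ ≤ M * ‖x - y‖ ^ 2 := by
  have hM₀ : 0 ≤ M := (norm_nonneg _).trans (hM y)
  have hlip : ∀ z, ‖fderiv ℝ g z - fderiv ℝ g y‖ ≤ M * ‖z - y‖ := fun z =>
    convex_univ.norm_image_sub_le_of_norm_fderiv_le
      (fun w _ => (hg.fderiv_right le_rfl).differentiable one_ne_zero w)
      (fun w _ => by rw [← norm_iteratedFDeriv_one, norm_iteratedFDeriv_fderiv]; exact hM w)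
      (mem_univ y) (mem_univ z)
  have := (convex_closedBall y ‖x - y‖).norm_image_sub_le_of_norm_fderiv_le'
    (fun z _ => hg.differentiable two_ne_zero z)
    (fun z hz => (hlip z).trans (mul_le_mul_of_nonneg_left (mem_closedBall_iff_norm.1 hz) hM₀))
    (mem_closedBall_self (norm_nonneg _))
    (mem_closedBall_iff_norm.2 le_rfl)
  rwa [sq, ← mul_assoc]

end Taylor

lemma ContinuousMultilinearMap.norm_le_of_sum_norm_proj_comp_sq_le {ι : Type*} [Fintype ι]
    {n : ℕ} {E : Type*} [NormedAddCommGroup E] [NormedSpace ℝ E]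
    (A : ContinuousMultilinearMap ℝ (fun _ : Fin n => E) (EuclideanSpace ℝ ι)) {M : ℝ}
    (hM : 0 ≤ M)
    (h : ∑ i, ‖(EuclideanSpace.proj i).compContinuousMultilinearMap A‖ ^ 2 ≤ M ^ 2) :
    ‖A‖ ≤ M := by
  refine A.opNorm_le_bound hM fun m => ?_
  have hsq : ‖A m‖ ^ 2 ≤ (M * ∏ j, ‖m j‖) ^ 2 := calc
    ‖A m‖ ^ 2 = ∑ i, ‖(EuclideanSpace.proj i).compContinuousMultilinearMap A m‖ ^ 2 := by
      simp [EuclideanSpace.norm_sq_eq]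
    _ ≤ ∑ i, (‖(EuclideanSpace.proj i).compContinuousMultilinearMap A‖ * ∏ j, ‖m j‖) ^ 2 :=
      Finset.sum_le_sum fun i _ => pow_le_pow_left₀ (norm_nonneg _) (le_opNorm _ m) 2
    _ = (∑ i, ‖(EuclideanSpace.proj i).compContinuousMultilinearMap A‖ ^ 2) *
        (∏ j, ‖m j‖) ^ 2 := by
      simp only [mul_pow, Finset.sum_mul]
    _ ≤ M ^ 2 * (∏ j, ‖m j‖) ^ 2 := by gcongr
    _ = (M * ∏ j, ‖m j‖) ^ 2 := (mul_pow _ _ _).symm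
  exact (pow_le_pow_iff_left₀ (norm_nonneg _) (by positivity) two_ne_zero).1 hsq

section Euclidean
variable {ι : Type*} [Fintype ι] [DecidableEq ι]

lemma gradient_apply_eq_fderiv_single (f : EuclideanSpace ℝ ι → ℝ) (x : EuclideanSpace ℝ ι)
    (i : ι) : gradient f x i = fderiv ℝ f x (EuclideanSpace.single i 1) := by
  rw [← inner_gradient_left, EuclideanSpace.inner_single_right]
  simp

lemma contDiff_gradient {n : WithTop ℕ∞} {f : EuclideanSpace ℝ ι → ℝ}
    (hf : ContDiff ℝ (n + 1) f) :
    ContDiff ℝ n (gradient f) := (contDiff_piLp 2).2 fun i => by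
  simp_rw [gradient_apply_eq_fderiv_single]
  exact (hf.fderiv_right le_rfl).clm_apply contDiff_const

lemma fderiv_gradient_apply {f : EuclideanSpace ℝ ι → ℝ} (hf : ContDiff ℝ 2 f)
    (x v : EuclideanSpace ℝ ι) (i : ι) :
    fderiv ℝ (gradient f) x v i = iteratedFDeriv ℝ 2 f x ![v, EuclideanSpace.single i 1] := by
  have hg : DifferentiableAt ℝ (gradient f) x :=
    (contDiff_gradient (n := 1) hf).differentiable one_ne_zero x
  have hcoord : HasFDerivAt (fun t => gradient f t i)
      (EuclideanSpace.proj i ∘L fderiv ℝ (gradient f) x) x :=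
    (EuclideanSpace.proj (𝕜 := ℝ) i).hasFDerivAt.comp x hg.hasFDerivAt
  rw [show fderiv ℝ (gradient f) x v i = fderiv ℝ (fun t => gradient f t i) x v by
    rw [hcoord.fderiv]; rfl]
  simp_rw [gradient_apply_eq_fderiv_single]
  rw [fderiv_clm_apply ((hf.fderiv_right one_add_one_eq_two.le).differentiable one_ne_zero x)
    (differentiableAt_const _), iteratedFDeriv_two_apply]
  simp

lemma norm_gradient_add_le_of_iteratedFDeriv_two_eq {f : EuclideanSpace ℝ ι → ℝ}
    (hf : ContDiff ℝ 3 f) {M : ℝ} (hM : 0 ≤ M)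
    (hbd : ∀ θ, ∑ i, ‖iteratedFDeriv ℝ 2 (fun t => gradient f t i) θ‖ ^ 2 ≤ M ^ 2)
    {θs : EuclideanSpace ℝ ι} (hθs : gradient f θs = 0) {c : ι → ℝ}
    (hH : ∀ v w : EuclideanSpace ℝ ι, iteratedFDeriv ℝ 2 f θs ![v, w] = -∑ i, c i * v i * w i)
    (θ : EuclideanSpace ℝ ι) :
    ‖gradient f θ + WithLp.toLp 2 (fun i => c i * (θ i - θs i))‖ ≤ M * ‖θ - θs‖ ^ 2 := by
  have hg : ContDiff ℝ 2 (gradient f) := contDiff_gradient hf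
  have hD2 (x : EuclideanSpace ℝ ι) : ‖iteratedFDeriv ℝ 2 (gradient f) x‖ ≤ M := by
    have hcoord (i : ι) : iteratedFDeriv ℝ 2 (fun t => gradient f t i) x =
        (EuclideanSpace.proj i).compContinuousMultilinearMap (iteratedFDeriv ℝ 2 (gradient f) x) :=
      (EuclideanSpace.proj (𝕜 := ℝ) i).iteratedFDeriv_comp_left (f := gradient f) (i := 2)
        hg.contDiffAt le_rfl
    exact ContinuousMultilinearMap.norm_le_of_sum_norm_proj_comp_sq_le _ hM
      (by simpa only [hcoord] using hbd x)
  have hlin :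
      fderiv ℝ (gradient f) θs (θ - θs) = -WithLp.toLp 2 (fun i => c i * (θ i - θs i)) := by
    ext i
    rw [fderiv_gradient_apply (hf.of_le (by norm_num)), hH]
    simp
  calc ‖gradient f θ + WithLp.toLp 2 (fun i => c i * (θ i - θs i))‖
      = ‖gradient f θ - gradient f θs - fderiv ℝ (gradient f) θs (θ - θs)‖ := by
        rw [hθs, hlin, sub_zero, sub_neg_eq_add]
    _ ≤ M * ‖θ - θs‖ ^ 2 := norm_sub_sub_fderiv_le_of_norm_iteratedFDeriv_two_le hg hD2 θ θs

end Euclidean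

lemma integral_sq_gaussianReal_zero (v : ℝ≥0) : ∫ x, x ^ 2 ∂gaussianReal 0 v = v := by
  rw [← variance_of_integral_eq_zero aemeasurable_id' integral_id_gaussianReal,
    variance_fun_id_gaussianReal]

section Pi
variable {ι : Type*} [Fintype ι] {μ : ι → Measure ℝ} [∀ i, IsProbabilityMeasure (μ i)]

lemma integrable_norm_sq_map_toLp_pi (h : ∀ i, Integrable (fun t => t ^ 2) (μ i)) :
    Integrable (fun x : EuclideanSpace ℝ ι => ‖x‖ ^ 2) ((Measure.pi μ).map (WithLp.toLp 2)) := by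
  rw [← MeasurableEquiv.coe_toLp,
    (MeasurableEquiv.toLp 2 _).measurableEmbedding.integrable_map_iff]
  simp only [Function.comp_def, MeasurableEquiv.coe_toLp, EuclideanSpace.real_norm_sq_eq]
  exact integrable_finsetSum _ fun i _ => integrable_comp_eval (f := fun t => t ^ 2) (h i)

lemma integral_norm_sq_map_toLp_pi (h : ∀ i, Integrable (fun t => t ^ 2) (μ i)) :
    ∫ x : EuclideanSpace ℝ ι, ‖x‖ ^ 2 ∂(Measure.pi μ).map (WithLp.toLp 2)
      = ∑ i, ∫ t, t ^ 2 ∂μ i := by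
  rw [← MeasurableEquiv.coe_toLp, (MeasurableEquiv.toLp 2 _).measurableEmbedding.integral_map]
  simp only [MeasurableEquiv.coe_toLp, EuclideanSpace.real_norm_sq_eq]
  rw [integral_finsetSum _ fun i _ => integrable_comp_eval (f := fun t => t ^ 2) (h i)]
  exact Finset.sum_congr rfl fun i _ =>
    integral_comp_eval (f := fun t => t ^ 2) (h i).aestronglyMeasurable

end Pi

lemma integrable_sq_gaussianReal (m : ℝ) (v : ℝ≥0) :
    Integrable (fun x => x ^ 2) (gaussianReal m v) :=
  (memLp_id_gaussianReal 2).integrable_sq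

theorem stmt17_general (d : ℕ) (p : EuclideanSpace ℝ (Fin d) → ℝ)
    (M : ℝ) (hM : 0 ≤ M)
    (hsm : ContDiff ℝ 3 fun θ => Real.log (p θ))
    (hbd : ∀ θ, ∑ i, ‖iteratedFDeriv ℝ 2
        (fun t => gradient (fun s => Real.log (p s)) t i) θ‖ ^ 2 ≤ M ^ 2)
    (θs : EuclideanSpace ℝ (Fin d))
    (hmax : ∀ θ, Real.log (p θ) ≤ Real.log (p θs))
    (lam : Fin d → ℝ≥0)
    -- the Hessian of `log p` at `θs` is `-H*` where `(H*)⁻¹` is diagonal with entries `lam`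
    (hH : ∀ v w : EuclideanSpace ℝ (Fin d),
      iteratedFDeriv ℝ 2 (fun s => Real.log (p s)) θs ![v, w] =
        -∑ i, ((lam i : ℝ))⁻¹ * v i * w i)
    (μLaplace : Measure (EuclideanSpace ℝ (Fin d)))
    (hμL : μLaplace =
      ((Measure.pi fun i => gaussianReal 0 (lam i)).map (WithLp.toLp 2) :
        Measure (EuclideanSpace ℝ (Fin d))).map fun x => θs + x) :
    (∫ θ, ‖gradient (fun s => Real.log (p s)) θ +
        (show EuclideanSpace ℝ (Fin d) from WithLp.toLp 2 fun i => ((lam i : ℝ))⁻¹ * (θ i - θs i))‖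
      ∂μLaplace) ≤ M * ∑ i, (lam i : ℝ) := by
  have hθs : gradient (fun s => Real.log (p s)) θs = 0 := by
    rw [gradient, IsLocalMax.fderiv_eq_zero (.of_forall hmax), map_zero]
  have hsq (i : Fin d) := integrable_sq_gaussianReal 0 (lam i)
  have hshift := measurableEmbedding_addLeft θs
  subst hμL
  calc _ ≤ ∫ θ, M * ‖θ - θs‖ ^ 2 ∂_ :=
        integral_mono_of_nonneg (ae_of_all _ fun _ => norm_nonneg _)
          (by simpa [hshift.integrable_map_iff, Function.comp_def] using
            (integrable_norm_sq_map_toLp_pi hsq).const_mul M)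
          (ae_of_all _ (norm_gradient_add_le_of_iteratedFDeriv_two_eq hsm hM hbd hθs hH))
    _ = M * ∑ i, (lam i : ℝ) := by
        simp [hshift.integral_map, integral_const_mul, integral_norm_sq_map_toLp_pi hsq,
          integral_sq_gaussianReal_zero]

theorem stmt17 (d : ℕ) (p : EuclideanSpace ℝ (Fin d) → ℝ) (hp : ∀ θ, 0 < p θ)
    (μpost : Measure (EuclideanSpace ℝ (Fin d)))
    (hμpost : μpost = volume.withDensity fun θ => ENNReal.ofReal (p θ))
    [IsProbabilityMeasure μpost]
    (α M : ℝ) (hα : 0 < α) (hM : 0 ≤ M)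
    (hsm : ContDiff ℝ 3 fun θ => Real.log (p θ))
    (hconv : StrongConvexOn Set.univ α fun θ => -Real.log (p θ))
    (hbd : ∀ θ, ∑ i, ‖iteratedFDeriv ℝ 2
        (fun t => gradient (fun s => Real.log (p s)) t i) θ‖ ^ 2 ≤ M ^ 2)
    (θs : EuclideanSpace ℝ (Fin d))
    (hmax : ∀ θ, Real.log (p θ) ≤ Real.log (p θs))
    (lam : Fin d → ℝ≥0) (hlam : ∀ i, lam i ≠ 0)
    -- the Hessian of `log p` at `θs` is `-H*` where `(H*)⁻¹` is diagonal with entries `lam`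
    (hH : ∀ v w : EuclideanSpace ℝ (Fin d),
      iteratedFDeriv ℝ 2 (fun s => Real.log (p s)) θs ![v, w] =
        -∑ i, ((lam i : ℝ))⁻¹ * v i * w i)
    (μLaplace : Measure (EuclideanSpace ℝ (Fin d)))
    (hμL : μLaplace =
      ((Measure.pi fun i => gaussianReal 0 (lam i)).map (WithLp.toLp 2) :
        Measure (EuclideanSpace ℝ (Fin d))).map fun x => θs + x) :
    (∫ θ, ‖gradient (fun s => Real.log (p s)) θ +
        (show EuclideanSpace ℝ (Fin d) from WithLp.toLp 2 fun i => ((lam i : ℝ))⁻¹ * (θ i - θs i))‖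
      ∂μLaplace) ≤ M * ∑ i, (lam i : ℝ) :=
  stmt17_general d p M hM hsm hbd θs hmax lam hH μLaplace hμL
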